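/- C_k(S,v,∞) is self-orthogonal if and only if there exists a polynomial g(x) = Σ_{s=0}^{n−2k} g_s x^s over F_q of degree at most n−2k such that (1) v_i² = u_i·g(a_i) for every 1 ≤ i ≤ n, and (2) g_{n−2k−1} + g_{n−2k}·Σ_{i=1}^n a_i = −1, where g_j denotes the coefficient of x^j in g. -/

import Mathlib

open Polynomial Finset

noncomputable section

/-- Hamming weight of a vector. -/
def wt {F : Type*} [Field F] {N : ℕ} (w : Fin N → F) : ℕ := Set.ncard {i | w i ≠ 0}

/-- The code `C_k(S,v,∞)` as a set of vectors of length `n+1`. -/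
def codeSet {F : Type*} [Field F] {n : ℕ} (a v : Fin n → F) (k : ℕ) :
    Set (Fin (n + 1) → F) :=
  {w | ∃ f : F[X], f.natDegree ≤ k ∧ f.coeff (k - 1) = 0 ∧
    w = Fin.snoc (fun i => v i * f.eval (a i)) (f.coeff k)}

/-- The Euclidean dual of a set of vectors. -/
def dualSet {F : Type*} [Field F] {N : ℕ} (C : Set (Fin N → F)) : Set (Fin N → F) :=
  {y | ∀ x ∈ C, ∑ i, x i * y i = 0}

/-- A (nonzero) code has minimum distance `d`: some nonzero codeword has weight `d`
and every nonzero codeword has weight at least `d`. -/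
def IsMinDist {F : Type*} [Field F] {N : ℕ} (C : Set (Fin N → F)) (d : ℕ) : Prop :=
  (∃ w ∈ C, w ≠ 0 ∧ wt w = d) ∧ ∀ w ∈ C, w ≠ 0 → d ≤ wt w

/-- `u i = ∏_{j ≠ i} (a i - a j)⁻¹`. -/
def uCoeff {F : Type*} [Field F] {n : ℕ} (a : Fin n → F) (i : Fin n) : F :=
  ∏ j ∈ Finset.univ.erase i, (a i - a j)⁻¹

/-- The set of Schur (componentwise) products of elements of two codes. -/
def schurSet {F : Type*} [Field F] {N : ℕ} (C D : Set (Fin N → F)) : Set (Fin N → F) :=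
  {w | ∃ c ∈ C, ∃ d ∈ D, w = c * d}

/-- The coefficient of `x^j` of a polynomial for an integer index `j`
(zero for negative `j`). -/
def coeffZ {F : Type*} [Field F] (g : F[X]) (j : ℤ) : F :=
  if 0 ≤ j then g.coeff j.toNat else 0

/-!
Put `w i = v i ^ 2`. On the monomial basis `X ^ j` (`j ≤ k`, `j ≠ k - 1`) of `V_k`,
self-orthogonality of `C_k(S,v,∞)` becomes a set of moment conditions: `∑ w i * a i ^ t = 0` for
`t ≤ 2k - 2` and `∑ w i * a i ^ (2k) = -1`. Let `g` interpolate `w i / u i` at the nodes `a i`,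
so that `∑ w i * a i ^ t = ∑ u i * (g * X ^ t)(a i)`. Lagrange interpolation gives
`∑ u i * P(a i) = P_(n-1) + P_n * ∑ a i` whenever `deg P ≤ n`. Hence the vanishing moments
kill the coefficients of `g` above `n - 2k` one at a time, and the top moment condition becomes
the linear condition on `g_(n-2k-1)` and `g_(n-2k)`. Each step can be reversed.
-/

section

variable {F : Type*} [Field F] {n : ℕ} {a : Fin n → F}

section Interpolation

lemma uCoeff_ne_zero (ha : Function.Injective a) (i : Fin n) : uCoeff a i ≠ 0 :=
  Lagrange.nodalWeight_ne_zero ha.injOn (mem_univ i)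

lemma sum_uCoeff_mul_eval_of_degree_lt (ha : Function.Injective a) {P : F[X]}
    (hP : P.degree < n) : ∑ i, uCoeff a i * P.eval (a i) = P.coeff (n - 1) := by
  have h := Lagrange.coeff_eq_sum (s := univ) ha.injOn (P := P) (by simpa using hP)
  rw [card_univ, Fintype.card_fin] at h
  rw [h]
  refine sum_congr rfl fun i _ => ?_
  rw [uCoeff, prod_inv_distrib, div_eq_mul_inv, mul_comm]

-- Subtract `P.coeff n` times the nodal polynomial `∏ (X - a i)` to get below degree `n`.
lemma sum_uCoeff_mul_eval_of_natDegree_le (ha : Function.Injective a) (hn : 0 < n) {P : F[X]}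
    (hP : P.natDegree ≤ n) :
    ∑ i, uCoeff a i * P.eval (a i) = P.coeff (n - 1) + P.coeff n * ∑ i, a i := by
  set N := Lagrange.nodal univ a
  have hN : N.natDegree = n := by simp [N, Lagrange.natDegree_nodal]
  have hN_lead : N.coeff n = 1 := hN ▸ Lagrange.nodal_monic.coeff_natDegree
  have hN_next : N.coeff (n - 1) = -∑ i, a i := by
    simpa [N, Lagrange.nodal] using prod_X_sub_C_coeff_card_pred univ a (by simpa using hn)
  set R := P - C (P.coeff n) * N
  have hR : R.degree < n := by
    refine (degree_lt_iff_coeff_zero _ _).2 fun m hm => ?_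
    have hm : n ≤ m := by exact_mod_cast hm
    rcases hm.eq_or_lt with rfl | hm
    · simp [R, hN_lead]
    · simp [R, coeff_eq_zero_of_natDegree_lt (hP.trans_lt hm),
        coeff_eq_zero_of_natDegree_lt (hN.trans_lt hm)]
  have hR_eval : ∀ i, R.eval (a i) = P.eval (a i) := fun i => by
    simp [R, Lagrange.eval_nodal_at_node (mem_univ i), N]
  simp_rw [← hR_eval]
  rw [sum_uCoeff_mul_eval_of_degree_lt ha hR]
  simp [R, hN_next]

end Interpolation

def weightedPowerSum (w a : Fin n → F) (t : ℕ) : F := ∑ i, w i * a i ^ t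

-- For `d < 0` this forces `g = 0`.
def CoeffZeroAbove (g : F[X]) (d : ℤ) : Prop := ∀ j : ℕ, d < j → g.coeff j = 0

section CoeffZ

variable {g : F[X]} {d : ℤ}

lemma CoeffZeroAbove.mono {e : ℤ} (hg : CoeffZeroAbove g d) (hde : d ≤ e) :
    CoeffZeroAbove g e :=
  fun j hj => hg j (hde.trans_lt hj)

lemma CoeffZeroAbove.coeffZ_eq_zero (hg : CoeffZeroAbove g d) {j : ℤ} (hj : d < j) :
    coeffZ g j = 0 := by
  unfold coeffZ
  split_ifs with hj0
  · exact hg _ (by omega)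
  · rfl

lemma coeff_mul_X_pow_eq_coeffZ (g : F[X]) (s j : ℕ) :
    (g * X ^ s).coeff j = coeffZ g (j - s) := by
  rw [coeff_mul_X_pow', coeffZ]
  split_ifs with h1 h2 h2
  · congr 1; omega
  · omega
  · omega
  · rfl

end CoeffZ

section Moments

variable {w : Fin n → F} {g : F[X]}

lemma weightedPowerSum_eq_coeffZ (ha : Function.Injective a)
    (hw : ∀ i, w i = uCoeff a i * g.eval (a i)) {s : ℕ} (hg : CoeffZeroAbove g (n - s)) :
    weightedPowerSum w a s = coeffZ g (n - s - 1) + coeffZ g (n - s) * ∑ i, a i := by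
  rcases Nat.eq_zero_or_pos n with rfl | hn
  · simp [weightedPowerSum, coeffZ]
    omega
  have hdeg : (g * X ^ s).natDegree ≤ n := natDegree_le_iff_coeff_eq_zero.2 fun j hj => by
    rw [coeff_mul_X_pow_eq_coeffZ]
    exact hg.coeffZ_eq_zero (by omega)
  calc weightedPowerSum w a s = ∑ i, uCoeff a i * (g * X ^ s).eval (a i) := by
        simp only [weightedPowerSum, hw, eval_mul, eval_pow, eval_X, mul_assoc]
    _ = _ := by
        rw [sum_uCoeff_mul_eval_of_natDegree_le ha hn hdeg, coeff_mul_X_pow_eq_coeffZ,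
          coeff_mul_X_pow_eq_coeffZ, Nat.cast_sub hn, Nat.cast_one, sub_right_comm]

-- Each vanishing moment kills one more top coefficient of `g`.
lemma coeffZeroAbove_of_weightedPowerSum_eq_zero (ha : Function.Injective a)
    (hw : ∀ i, w i = uCoeff a i * g.eval (a i)) (hg : g.degree < n) :
    ∀ m : ℕ, (∀ t < m, weightedPowerSum w a t = 0) → CoeffZeroAbove g (n - m - 1)
  | 0, _ => fun j hj =>
    coeff_eq_zero_of_degree_lt (hg.trans_le (by exact_mod_cast (by omega : n ≤ j)))
  | m + 1, hm => by
    have ih := coeffZeroAbove_of_weightedPowerSum_eq_zero ha hw hg m fun t ht => hm t (by omega)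
    have hsum := weightedPowerSum_eq_coeffZ ha hw (s := m) (ih.mono (by omega))
    rw [hm m (by omega), ih.coeffZ_eq_zero (j := n - m) (by omega), zero_mul, add_zero] at hsum
    intro j hj
    rcases (by omega : (n : ℤ) - m - 1 < j ∨ (j : ℤ) = n - m - 1) with hlt | heq
    · exact ih j hlt
    · simpa [coeffZ, ← heq] using hsum.symm

end Moments

theorem weightedPowerSum_conditions_iff_exists_poly (ha : Function.Injective a)
    (w : Fin n → F) {k : ℕ} (hk : 1 ≤ k) :
    ((∀ t < 2 * k - 1, weightedPowerSum w a t = 0) ∧ weightedPowerSum w a (2 * k) = -1) ↔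
      ∃ g : F[X], CoeffZeroAbove g (n - 2 * k) ∧ (∀ i, w i = uCoeff a i * g.eval (a i)) ∧
        coeffZ g (n - 2 * k - 1) + coeffZ g (n - 2 * k) * ∑ i, a i = -1 := by
  have htop_eq {g : F[X]} (hw : ∀ i, w i = uCoeff a i * g.eval (a i))
      (hg : CoeffZeroAbove g (n - 2 * k)) : weightedPowerSum w a (2 * k) =
        coeffZ g (n - 2 * k - 1) + coeffZ g (n - 2 * k) * ∑ i, a i := by
    have := weightedPowerSum_eq_coeffZ ha hw (s := 2 * k) (by exact_mod_cast hg)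
    push_cast at this
    exact this
  constructor
  · rintro ⟨hlow, htop⟩
    set g := Lagrange.interpolate univ a (fun i => w i / uCoeff a i) with hg_def
    have hw : ∀ i, w i = uCoeff a i * g.eval (a i) := fun i => by
      rw [hg_def, Lagrange.eval_interpolate_at_node _ ha.injOn (mem_univ i),
        mul_div_cancel₀ _ (uCoeff_ne_zero ha i)]
    have hdeg : g.degree < n := by
      have := Lagrange.degree_interpolate_lt (s := univ) (r := fun i => w i / uCoeff a i)
        ha.injOn
      rwa [card_univ, Fintype.card_fin] at this
    have hg : CoeffZeroAbove g (n - 2 * k) :=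
      (coeffZeroAbove_of_weightedPowerSum_eq_zero ha hw hdeg _ hlow).mono (by omega)
    exact ⟨g, hg, hw, htop_eq hw hg ▸ htop⟩
  · rintro ⟨g, hg, hw, htop⟩
    refine ⟨fun t ht => ?_, htop_eq hw hg ▸ htop⟩
    rw [weightedPowerSum_eq_coeffZ ha hw (hg.mono (by omega)), hg.coeffZ_eq_zero (by omega),
      hg.coeffZ_eq_zero (by omega), zero_mul, add_zero]

/-- The paper's `V_k`. -/
def polySpace (F : Type*) [Field F] (k : ℕ) : Set F[X] :=
  {f | f.natDegree ≤ k ∧ f.coeff (k - 1) = 0}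

section Pairing

variable {k : ℕ} {f h : F[X]}

lemma X_pow_mem_polySpace {j : ℕ} (hj : j ≤ k) (hj' : j ≠ k - 1) : X ^ j ∈ polySpace F k :=
  ⟨by simpa using hj, by simp [coeff_X_pow, hj'.symm]⟩

lemma coeff_mul_two_mul_sub_one_eq_zero (hf : f ∈ polySpace F k) (hh : h ∈ polySpace F k) :
    (f * h).coeff (2 * k - 1) = 0 := by
  rw [coeff_mul]
  refine sum_eq_zero fun x hx => ?_
  rw [HasAntidiagonal.mem_antidiagonal] at hx
  rcases lt_trichotomy x.1 (k - 1) with h1 | h1 | h1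
  · rw [coeff_eq_zero_of_natDegree_lt (hh.1.trans_lt (by omega)), mul_zero]
  · rw [h1, hf.2, zero_mul]
  · rcases (by omega : x.1 = k ∨ k < x.1) with h2 | h2
    · rw [show x.2 = k - 1 by omega, hh.2, mul_zero]
    · rw [coeff_eq_zero_of_natDegree_lt (hf.1.trans_lt h2), zero_mul]

lemma sum_mul_eval_eq_sum_coeff_mul_weightedPowerSum (w a : Fin n → F) {P : F[X]} {d : ℕ}
    (hP : P.natDegree < d) :
    ∑ i, w i * P.eval (a i) = ∑ t ∈ range d, P.coeff t * weightedPowerSum w a t := by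
  simp only [eval_eq_sum_range' hP, weightedPowerSum, mul_sum]
  rw [sum_comm]
  exact sum_congr rfl fun t _ => sum_congr rfl fun i _ => by ring

-- `V_k` is spanned by the monomials `X ^ j` with `j ≤ k`, `j ≠ k - 1`, and their pairwise
-- products reach every degree `t ≤ 2k - 2` once `k ≥ 3`.
theorem polySpace_pairing_eq_zero_iff (w a : Fin n → F) (hk : 3 ≤ k) :
    (∀ f ∈ polySpace F k, ∀ h ∈ polySpace F k,
        ∑ i, w i * (f * h).eval (a i) + f.coeff k * h.coeff k = 0) ↔
      (∀ t < 2 * k - 1, weightedPowerSum w a t = 0) ∧ weightedPowerSum w a (2 * k) = -1 := by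
  constructor
  · intro H
    have hmono : ∀ j l, j ≤ k → j ≠ k - 1 → l ≤ k → l ≠ k - 1 →
        weightedPowerSum w a (j + l) + (if k = j then 1 else 0) * (if k = l then 1 else 0) = 0 :=
      fun j l hj hj' hl hl' => by
        simpa [weightedPowerSum, coeff_X_pow, pow_add] using
          H _ (X_pow_mem_polySpace hj hj') _ (X_pow_mem_polySpace hl hl')
    refine ⟨fun t ht => ?_, ?_⟩
    · rcases le_or_gt t (2 * k - 4) with ht' | ht'
      · have := hmono (min t (k - 2)) (t - min t (k - 2)) (by omega) (by omega) (by omega)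
          (by omega)
        rwa [Nat.add_sub_cancel' (min_le_left _ _), if_neg (show k ≠ min t (k - 2) by omega),
          zero_mul, add_zero] at this
      · have := hmono k (t - k) le_rfl (by omega) (by omega) (by omega)
        rwa [Nat.add_sub_cancel' (by omega), if_neg (show k ≠ t - k by omega), mul_zero,
          add_zero] at this
    · have := hmono k k le_rfl (by omega) le_rfl (by omega)
      rw [if_pos rfl, ← two_mul, mul_one] at this
      exact eq_neg_of_add_eq_zero_left this
  · rintro ⟨hlow, htop⟩ f hf h hh
    have hdeg : (f * h).natDegree < 2 * k - 1 + 1 + 1 :=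
      (natDegree_mul_le.trans (add_le_add hf.1 hh.1)).trans_lt (by omega)
    rw [sum_mul_eval_eq_sum_coeff_mul_weightedPowerSum w a hdeg, sum_range_succ, sum_range_succ,
      sum_eq_zero fun t ht => by rw [hlow t (mem_range.1 ht), mul_zero],
      coeff_mul_two_mul_sub_one_eq_zero hf hh, show 2 * k - 1 + 1 = 2 * k by omega, htop,
      two_mul, coeff_mul_add_eq_of_natDegree_le hf.1 hh.1]
    ring

end Pairing

section Code

variable {k : ℕ}

lemma sum_snoc_mul_snoc (v : Fin n → F) (f h : F[X]) :
    ∑ i, (Fin.snoc (fun i => v i * h.eval (a i)) (h.coeff k) : Fin (n + 1) → F) i *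
        (Fin.snoc (fun i => v i * f.eval (a i)) (f.coeff k) : Fin (n + 1) → F) i =
      ∑ i, v i ^ 2 * (f * h).eval (a i) + f.coeff k * h.coeff k := by
  simp only [Fin.sum_univ_castSucc, Fin.snoc_castSucc, Fin.snoc_last, eval_mul]
  congr 1
  · exact sum_congr rfl fun i _ => by ring
  · ring

lemma codeSet_subset_dualSet_iff (v : Fin n → F) :
    codeSet a v k ⊆ dualSet (codeSet a v k) ↔
      ∀ f ∈ polySpace F k, ∀ h ∈ polySpace F k,
        ∑ i, v i ^ 2 * (f * h).eval (a i) + f.coeff k * h.coeff k = 0 := by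
  constructor
  · intro hsub f hf h hh
    rw [← sum_snoc_mul_snoc]
    exact hsub ⟨f, hf.1, hf.2, rfl⟩ _ ⟨h, hh.1, hh.2, rfl⟩
  · rintro H _ ⟨f, hf₁, hf₂, rfl⟩ _ ⟨h, hh₁, hh₂, rfl⟩
    rw [sum_snoc_mul_snoc]
    exact H f ⟨hf₁, hf₂⟩ h ⟨hh₁, hh₂⟩

end Code

end

theorem stmt13_general {F : Type*} [Field F] (n k : ℕ) (hk3 : 3 ≤ k)
    (a : Fin n → F) (ha : Function.Injective a) (v : Fin n → F) :
    codeSet a v k ⊆ dualSet (codeSet a v k) ↔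
      ∃ g : F[X],
        (∀ j : ℕ, ((n : ℤ) - 2 * k) < (j : ℤ) → g.coeff j = 0) ∧
        (∀ i, v i ^ 2 = uCoeff a i * g.eval (a i)) ∧
        coeffZ g ((n : ℤ) - 2 * k - 1) +
            coeffZ g ((n : ℤ) - 2 * k) * (∑ i, a i) = -1 := by
  rw [codeSet_subset_dualSet_iff, polySpace_pairing_eq_zero_iff _ _ hk3,
    weightedPowerSum_conditions_iff_exists_poly ha _ (by omega)]
  rfl

theorem stmt13 {F : Type*} [Field F] [Fintype F] (n k : ℕ)
    (hk3 : 3 ≤ k) (hkn : k + 2 ≤ n) (hnq : n ≤ Fintype.card F)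
    (a : Fin n → F) (ha : Function.Injective a)
    (v : Fin n → F) (hv : ∀ i, v i ≠ 0) :
    codeSet a v k ⊆ dualSet (codeSet a v k) ↔
      ∃ g : F[X],
        (∀ j : ℕ, ((n : ℤ) - 2 * k) < (j : ℤ) → g.coeff j = 0) ∧
        (∀ i, v i ^ 2 = uCoeff a i * g.eval (a i)) ∧
        coeffZ g ((n : ℤ) - 2 * k - 1) +
            coeffZ g ((n : ℤ) - 2 * k) * (∑ i, a i) = -1 :=
  stmt13_general n k hk3 a ha v
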